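/- arXiv:0711.2236 — 3 statements merged into one kernel-verified Lean document; each statement's English description precedes it below -/
import Mathlib

section
/- Let M be an n×n Manin matrix over an associative unital (possibly noncommutative) ring R. Then: (a) if M' is obtained from M by interchanging two distinct columns, then det^col(M') = −det^col(M); (b) if two distinct columns of M coincide, then det^col(M) = 0; (c) if two distinct rows of M coincide, then det^col(M) = 0. -/
/-!
Exchanging two adjacent factors in the products defining `detCol` changes each term by a
commutator `[M σ(j) j, M σ(k) k]`; the cross-commutator relation makes this change odd under
`σ ↦ σ * swap j k`, so the sum is unchanged. Hence the column determinant may be computed with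
the columns multiplied in any order. A column swap then only costs `sign`, and two equal columns
can be brought to the front, where commutativity within a column makes the terms of `σ` and
`σ * swap c₁ c₂` cancel. Equal rows need no relation at all: `σ` and `swap r₁ r₂ * σ` give
the same product with opposite signs.
-/

open scoped BigOperators

/-- A matrix `M` over a (possibly noncommutative) ring is a *Manin matrix* if
entries of the same column commute and cross-commutators of 2×2 submatrices are equal. -/
def Matrix.IsManin {R : Type*} [Ring R] {n m : ℕ} (M : Matrix (Fin n) (Fin m) R) : Prop :=
  (∀ i k : Fin n, ∀ j : Fin m, M i j * M k j = M k j * M i j) ∧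
  (∀ i k : Fin n, ∀ j l : Fin m,
    M i j * M k l - M k l * M i j = M k j * M i l - M i l * M k j)

/-- Column determinant: factors multiplied in order of increasing column index. -/
noncomputable def Matrix.detCol {R : Type*} [Ring R] {n : ℕ}
    (M : Matrix (Fin n) (Fin n) R) : R :=
  ∑ σ : Equiv.Perm (Fin n),
    (Equiv.Perm.sign σ : ℤ) • ((List.finRange n).map (fun i => M (σ i) i)).prod

/-- Row determinant: factors multiplied in order of increasing row index. -/
noncomputable def Matrix.detRow {R : Type*} [Ring R] {n : ℕ}
    (M : Matrix (Fin n) (Fin n) R) : R :=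
  ∑ σ : Equiv.Perm (Fin n),
    (Equiv.Perm.sign σ : ℤ) • ((List.finRange n).map (fun i => M i (σ i))).prod

/-- Row permanent: factors multiplied in order of increasing row index. -/
noncomputable def Matrix.permRow {R : Type*} [Ring R] {n : ℕ}
    (M : Matrix (Fin n) (Fin n) R) : R :=
  ∑ σ : Equiv.Perm (Fin n), ((List.finRange n).map (fun i => M i (σ i))).prod

open Equiv Equiv.Perm Finset

theorem Equiv.Perm.sum_eq_zero_of_mul_swap {ι α : Type*} [Fintype ι] [DecidableEq ι]
    [AddCommGroup α] {f : Perm ι → α} {a b : ι} (hab : a ≠ b)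
    (hf : ∀ σ, f (σ * Equiv.swap a b) = -f σ) : ∑ σ, f σ = 0 :=
  sum_ninvolution (fun σ => σ * Equiv.swap a b) (fun σ => by rw [hf, add_neg_cancel])
    (fun σ _ h => hab (Equiv.swap_eq_one_iff.mp (mul_left_cancel (h.trans (mul_one σ).symm))))
    (fun _ => mem_univ _) (fun σ => by simp [mul_assoc])

theorem Equiv.Perm.sum_eq_zero_of_swap_mul {ι α : Type*} [Fintype ι] [DecidableEq ι]
    [AddCommGroup α] {f : Perm ι → α} {a b : ι} (hab : a ≠ b)
    (hf : ∀ σ, f (Equiv.swap a b * σ) = -f σ) : ∑ σ, f σ = 0 := by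
  rw [← Equiv.sum_comp (Equiv.inv (Perm ι))]
  exact sum_eq_zero_of_mul_swap hab fun σ => by simpa [swap_inv] using hf σ⁻¹

namespace Matrix

def HasEqualCrossCommutators {R m n : Type*} [Ring R] (M : Matrix m n R) : Prop :=
  ∀ i k j l, M i j * M k l - M k l * M i j = M k j * M i l - M i l * M k j

theorem map_swap_of_notMem {α ι : Type*} [DecidableEq ι] (M : Matrix ι ι α) (σ : Perm ι)
    {a b : ι} {L : List ι} (ha : a ∉ L) (hb : b ∉ L) :
    L.map (fun c => M (σ (Equiv.swap a b c)) c) = L.map fun c => M (σ c) c :=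
  List.map_congr_left fun c hc => by
    rw [Equiv.swap_apply_of_ne_of_ne (ne_of_mem_of_not_mem hc ha)
      (ne_of_mem_of_not_mem hc hb)]

variable {R ι : Type*} [Ring R] [Fintype ι] [DecidableEq ι]

noncomputable def detColAlong (M : Matrix ι ι R) (L : List ι) : R :=
  ∑ σ : Perm ι, (sign σ : ℤ) • (L.map fun c => M (σ c) c).prod

theorem detColAlong_finRange {n : ℕ} (M : Matrix (Fin n) (Fin n) R) :
    M.detColAlong (List.finRange n) = M.detCol :=
  rfl

variable (M : Matrix ι ι R)

theorem detColAlong_swap_adjacent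
    (hcross : M.HasEqualCrossCommutators) {A B : List ι} {j k : ι} (hnd : (A ++ j :: k :: B).Nodup) :
    M.detColAlong (A ++ j :: k :: B) = M.detColAlong (A ++ k :: j :: B) := by
  obtain ⟨hjk, hjA, hkA, hjB, hkB⟩ : j ≠ k ∧ j ∉ A ∧ k ∉ A ∧ j ∉ B ∧ k ∉ B := by
    simp only [List.nodup_append, List.nodup_cons, List.mem_cons] at hnd
    refine ⟨?_, ?_, ?_, ?_, ?_⟩ <;> grind
  let P (σ : Perm ι) (L : List ι) : R := (L.map fun c => M (σ c) c).prod
  rw [← sub_eq_zero, detColAlong, detColAlong, ← sum_sub_distrib]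
  calc ∑ σ : Perm ι, ((sign σ : ℤ) • P σ (A ++ j :: k :: B) - (sign σ : ℤ) • P σ (A ++ k :: j :: B))
      = ∑ σ : Perm ι, (sign σ : ℤ) •
          (P σ A * (M (σ j) j * M (σ k) k - M (σ k) k * M (σ j) j) * P σ B) := by
        refine sum_congr rfl fun σ _ => ?_
        simp only [P, List.map_append, List.prod_append, List.map_cons, List.prod_cons, ← smul_sub]
        noncomm_ring
    _ = 0 := by
      refine sum_eq_zero_of_mul_swap hjk fun σ => ?_
      simp only [P, map_swap_of_notMem M σ hjA hkA, map_swap_of_notMem M σ hjB hkB,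
        Perm.mul_apply, Equiv.swap_apply_left, Equiv.swap_apply_right, Perm.sign_mul,
        Perm.sign_swap hjk, hcross (σ j) (σ k) j k]
      rw [mul_neg_one, Units.val_neg, neg_smul]

theorem detColAlong_perm
    (hcross : M.HasEqualCrossCommutators)
    {L₁ L₂ : List ι} (h : L₁.Perm L₂) (A : List ι) (hnd : (A ++ L₁).Nodup) :
    M.detColAlong (A ++ L₁) = M.detColAlong (A ++ L₂) := by
  induction h generalizing A with
  | nil => rfl
  | @cons x L₁ L₂ _ ih =>
    simpa only [List.append_assoc, List.singleton_append] using
      ih (A ++ [x]) (by simpa only [List.append_assoc, List.singleton_append] using hnd)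
  | swap x y L => exact M.detColAlong_swap_adjacent hcross hnd
  | trans h₁₂ _ ih₁ ih₂ => exact (ih₁ A hnd).trans (ih₂ A ((h₁₂.append_left A).nodup_iff.mp hnd))

theorem detColAlong_eq_detCol {n : ℕ} {M : Matrix (Fin n) (Fin n) R}
    (hcross : M.HasEqualCrossCommutators)
    {L : List (Fin n)} (h : L.Perm (List.finRange n)) : M.detColAlong L = M.detCol :=
  (M.detColAlong_perm hcross h [] (h.nodup_iff.mpr (List.nodup_finRange n))).trans
    M.detColAlong_finRange

theorem detColAlong_cons_cons_eq_zero {a b : ι} {L : List ι} (hab : a ≠ b) (haL : a ∉ L)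
    (hbL : b ∉ L) (hcomm : ∀ i k, M i a * M k a = M k a * M i a) (hcol : ∀ i, M i a = M i b) :
    M.detColAlong (a :: b :: L) = 0 :=
  sum_eq_zero_of_mul_swap hab fun σ => by
    simp only [List.map_cons, List.prod_cons, Perm.mul_apply, Equiv.swap_apply_left,
      Equiv.swap_apply_right, map_swap_of_notMem M σ haL hbL, ← hcol, ← mul_assoc,
      hcomm (σ b) (σ a), Perm.sign_mul, Perm.sign_swap hab, mul_neg_one, Units.val_neg, neg_smul]

section Fin

variable {n : ℕ} (M : Matrix (Fin n) (Fin n) R)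

theorem detCol_submatrix_perm (τ : Perm (Fin n)) :
    (M.submatrix id τ).detCol = (sign τ : ℤ) • M.detColAlong ((List.finRange n).map τ) := by
  rw [detColAlong, smul_sum, detCol, ← Equiv.sum_comp (Equiv.mulRight τ)]
  refine sum_congr rfl fun σ _ => ?_
  rw [Equiv.coe_mulRight, Perm.sign_mul, Units.val_mul, mul_comm, mul_smul, List.map_map]
  rfl

theorem detCol_submatrix_perm_of_cross
    (hcross : M.HasEqualCrossCommutators)
    (τ : Perm (Fin n)) : (M.submatrix id τ).detCol = (sign τ : ℤ) • M.detCol := by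
  rw [detCol_submatrix_perm, detColAlong_eq_detCol hcross τ.map_finRange_perm]

theorem detCol_eq_zero_of_col_eq
    (hcross : M.HasEqualCrossCommutators)
    {c₁ c₂ : Fin n} (hne : c₁ ≠ c₂) (hcomm : ∀ i k, M i c₁ * M k c₁ = M k c₁ * M i c₁)
    (hcol : ∀ i, M i c₁ = M i c₂) : M.detCol = 0 := by
  set L := c₁ :: c₂ :: ((List.finRange n).erase c₁).erase c₂
  have hperm : L.Perm (List.finRange n) := by
    refine ((List.perm_cons_erase (List.mem_finRange c₁)).trans
      ((List.perm_cons_erase ?_).cons c₁)).symm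
    exact (List.mem_erase_of_ne hne.symm).mpr (List.mem_finRange c₂)
  have hnd := hperm.nodup_iff.mpr (List.nodup_finRange n)
  simp only [L, List.nodup_cons, List.mem_cons, not_or] at hnd
  rw [← detColAlong_eq_detCol hcross hperm]
  exact M.detColAlong_cons_cons_eq_zero hne hnd.1.2 hnd.2.1 hcomm hcol

theorem detCol_eq_zero_of_row_eq {r₁ r₂ : Fin n} (hne : r₁ ≠ r₂) (hrow : ∀ j, M r₁ j = M r₂ j) :
    M.detCol = 0 := by
  have hrows : ∀ i, M (Equiv.swap r₁ r₂ i) = M i := fun i => by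
    rw [Equiv.swap_apply_def]
    split_ifs <;> simp_all [funext hrow]
  exact sum_eq_zero_of_swap_mul hne fun σ => by
    simp only [Perm.mul_apply, hrows, Perm.sign_mul, Perm.sign_swap hne, neg_one_mul,
      Units.val_neg, neg_smul]

end Fin

end Matrix

/-- for a Manin matrix `M`: (a) interchanging two distinct columns changes
the sign of the column determinant; (b) if two distinct columns of `M` coincide then
`detCol M = 0`; (c) if two distinct rows of `M` coincide then `detCol M = 0`. -/
theorem detCol_alternating {R : Type*} [Ring R] {n : ℕ}
    (M : Matrix (Fin n) (Fin n) R) (hM : M.IsManin) :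
    (∀ c₁ c₂ : Fin n, c₁ ≠ c₂ →
      (Matrix.of fun i j => M i (Equiv.swap c₁ c₂ j)).detCol = - M.detCol) ∧
    (∀ c₁ c₂ : Fin n, c₁ ≠ c₂ → (∀ i, M i c₁ = M i c₂) → M.detCol = 0) ∧
    (∀ r₁ r₂ : Fin n, r₁ ≠ r₂ → (∀ j, M r₁ j = M r₂ j) → M.detCol = 0) := by
  refine ⟨fun c₁ c₂ hne => ?_, fun c₁ c₂ hne hcol => ?_, fun r₁ r₂ hne hrow => ?_⟩
  · rw [show (Matrix.of fun i j => M i (Equiv.swap c₁ c₂ j)) = M.submatrix id (Equiv.swap c₁ c₂)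
      from rfl, M.detCol_submatrix_perm_of_cross hM.2, Perm.sign_swap hne, Units.val_neg,
      Units.val_one, neg_smul, one_smul]
  · exact M.detCol_eq_zero_of_col_eq hM.2 hne (hM.1 · · c₁) hcol
  · exact M.detCol_eq_zero_of_row_eq hne hrow
end

section
/- Let A and B be n×n Manin matrices over an associative unital (possibly noncommutative) ring R such that every entry of A commutes with every entry of B (i.e. [A_{ij}, B_{kl}] = 0 for all i,j,k,l). Then the product AB is a Manin matrix and det^col(AB) = det^col(A)·det^col(B). -/
open scoped BigOperators

/-!
Expanding `(A * B) i j * (A * B) k l = ∑ a b, A i a * A k b * (B a j * B b l)`, each Manin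
relation for `A * B` becomes a sum `∑ a b, C a b * S a b` in which
`C a b = A i a * A k b - A k a * A i b` is antisymmetric with zero diagonal (because `A` is Manin)
and `S` is symmetric (because `B` is Manin), so it vanishes.

For the determinant, expanding the product gives
`detCol (A * B) = ∑ f, detCol (A with columns f) * ∏ⱼ B (f j) j`. For a Manin matrix, pairing `σ`
with `σ * swap a b` in `detCol` shows that swapping two adjacent columns changes the sign (the two
middle factors differ exactly by a Manin relation) and that two equal adjacent columns give `0`.
Adjacent transpositions generate `Sₙ`, so `detCol` of a Manin matrix is alternating in its
columns: only bijective `f` survive, each contributing `sign f • detCol A`.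
-/

open Equiv Finset

theorem Finset.sum_sum_mul_eq_zero_of_antisymm_of_symm {R ι : Type*}
    [NonUnitalNonAssocSemiring R] [Fintype ι] (C S : ι → ι → R) (hC : ∀ a b, C a b + C b a = 0)
    (hC_diag : ∀ a, C a a = 0) (hS : ∀ a b, S a b = S b a) :
    ∑ a, ∑ b, C a b * S a b = 0 := by
  rw [← Finset.sum_product']
  refine Finset.sum_involution (fun p _ => p.swap) (fun p _ => ?_) (fun p _ hp hswap => ?_)
    (fun p _ => Finset.mem_univ _) (fun p _ => rfl)
  · simp only [Prod.fst_swap, Prod.snd_swap]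
    rw [hS p.2, ← add_mul, hC, zero_mul]
  · refine absurd ?_ hp
    obtain ⟨a, b⟩ := p
    obtain rfl : b = a := congrArg Prod.fst hswap
    rw [hC_diag, zero_mul]

theorem List.exists_finRange_eq_append_cons_cons {n : ℕ} {a b : Fin n}
    (h : b.val = a.val + 1) : ∃ l₁ l₂, List.finRange n = l₁ ++ a :: b :: l₂ := by
  refine ⟨(List.finRange n).take a, (List.finRange n).drop (b + 1), ?_⟩
  conv_lhs => rw [← List.take_append_drop a (List.finRange n)]
  rw [List.drop_eq_getElem_cons (by simp), List.drop_eq_getElem_cons (by simp; omega)]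
  simp [Fin.ext_iff, h]

theorem Equiv.swap_apply_of_mem_of_nodup {α : Type*} [DecidableEq α] {a b x : α}
    {l₁ l₂ : List α} (hl : (l₁ ++ a :: b :: l₂).Nodup) (hx : x ∈ l₁ ++ l₂) :
    Equiv.swap a b x = x := by
  have hperm : List.Perm (l₁ ++ a :: b :: l₂) (a :: b :: (l₁ ++ l₂)) :=
    List.perm_middle.trans (List.perm_middle.cons a)
  rw [hperm.nodup_iff, List.nodup_cons, List.nodup_cons, List.mem_cons] at hl
  exact swap_apply_of_ne_of_ne (fun h => hl.1 (.inr (h ▸ hx))) fun h => hl.2.1 (h ▸ hx)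

theorem Equiv.Perm.sum_sign_smul_eq_zero {α M : Type*} [Fintype α] [DecidableEq α]
    [AddCommGroup M] {a b : α} (hab : a ≠ b) (F : Perm α → M)
    (hF : ∀ σ, F (σ * Equiv.swap a b) = F σ) : ∑ σ, (Perm.sign σ : ℤ) • F σ = 0 := by
  refine Finset.sum_involution (fun σ _ => σ * Equiv.swap a b) (fun σ _ => ?_)
    (fun σ _ _ h => ?_) (fun σ _ => Finset.mem_univ _) (fun σ _ => by simp)
  · rw [hF, Perm.sign_mul, Perm.sign_swap hab]; simp
  · exact hab (σ.injective (by simpa using congrArg (· a) h)).symm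

theorem List.prod_map_finRange_sum {R α : Type*} [Semiring R] [Fintype α] (n : ℕ)
    (g : Fin n → α → R) :
    ((List.finRange n).map fun j => ∑ a, g j a).prod =
      ∑ f : Fin n → α, ((List.finRange n).map fun j => g j (f j)).prod := by
  induction n with
  | zero => simp
  | succ m ih =>
    rw [← (Fin.consEquiv fun _ => α).sum_comp, Fintype.sum_prod_type]
    simp only [List.finRange_succ, List.map_cons, List.prod_cons, List.map_map,
      Function.comp_def, Fin.consEquiv_apply, Fin.cons_zero, Fin.cons_succ, ih, sum_mul_sum]

theorem List.prod_map_mul_of_commute {M ι : Type*} [Monoid M] (l : List ι) (u v : ι → M)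
    (h : ∀ j k, Commute (v j) (u k)) :
    (l.map fun j => u j * v j).prod = (l.map u).prod * (l.map v).prod := by
  induction l with
  | nil => simp
  | cons x l ih =>
    have hx : Commute (v x) (l.map u).prod :=
      Commute.list_prod_right _ _ fun z hz => by
        obtain ⟨k, -, rfl⟩ := List.mem_map.1 hz
        exact h x k
    simp only [List.map_cons, List.prod_cons, ih, mul_assoc, hx.left_comm]

namespace Matrix

theorem mul_apply_mul_mul_apply {R : Type*} [Semiring R] {n m p : ℕ}
    {A : Matrix (Fin n) (Fin m) R} {B : Matrix (Fin m) (Fin p) R}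
    (hAB : ∀ i j k l, Commute (A i j) (B k l)) (i k : Fin n) (j l : Fin p) :
    (A * B) i j * (A * B) k l = ∑ a, ∑ b, A i a * A k b * (B a j * B b l) := by
  rw [mul_apply, mul_apply, Finset.sum_mul_sum]
  refine Finset.sum_congr rfl fun a _ => Finset.sum_congr rfl fun b _ => ?_
  simp only [mul_assoc, (hAB k b a j).symm.left_comm]

variable {R : Type*} [Ring R]

theorem IsManin.submatrix {n m p q : ℕ} {M : Matrix (Fin n) (Fin m) R} (hM : M.IsManin)
    (e : Fin p → Fin n) (f : Fin q → Fin m) : (M.submatrix e f).IsManin :=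
  ⟨fun i k j => hM.1 (e i) (e k) (f j), fun i k j l => hM.2 (e i) (e k) (f j) (f l)⟩

theorem IsManin.mul {n m p : ℕ} {A : Matrix (Fin n) (Fin m) R} {B : Matrix (Fin m) (Fin p) R}
    (hA : A.IsManin) (hB : B.IsManin) (hAB : ∀ i j k l, Commute (A i j) (B k l)) :
    (A * B).IsManin := by
  have hC (i k : Fin n) (a b : Fin m) :
      (A i a * A k b - A k a * A i b) + (A i b * A k a - A k b * A i a) = 0 := by
    rw [← sub_eq_zero.2 (hA.2 i k a b)]; abel
  have hC_diag (i k : Fin n) (a : Fin m) : A i a * A k a - A k a * A i a = 0 :=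
    sub_eq_zero.2 (hA.1 i k a)
  constructor
  · intro i k j
    rw [← sub_eq_zero, mul_apply_mul_mul_apply hAB, mul_apply_mul_mul_apply hAB]
    calc _ = ∑ a, ∑ b, (A i a * A k b - A k a * A i b) * (B a j * B b j) := by
          simp only [← Finset.sum_sub_distrib, sub_mul]
      _ = 0 := Finset.sum_sum_mul_eq_zero_of_antisymm_of_symm _ _ (hC i k) (hC_diag i k)
          fun a b => hB.1 a b j
  · intro i k j l
    rw [← sub_eq_zero, mul_apply_mul_mul_apply hAB, mul_apply_mul_mul_apply hAB,
      mul_apply_mul_mul_apply hAB, mul_apply_mul_mul_apply hAB]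
    calc _ = ∑ a, ∑ b, (A i a * A k b - A k a * A i b) * (B a j * B b l + B a l * B b j) := by
          simp only [← Finset.sum_sub_distrib]
          exact Finset.sum_congr rfl fun a _ => Finset.sum_congr rfl fun b _ => by noncomm_ring
      _ = 0 := Finset.sum_sum_mul_eq_zero_of_antisymm_of_symm _ _ (hC i k) (hC_diag i k)
          fun a b => by
            rw [← sub_eq_zero, ← sub_eq_zero.2 (hB.2 a b j l)]; abel

section AdjacentColumns

variable {n : ℕ} {M : Matrix (Fin n) (Fin n) R} {a b : Fin n}

-- `P σ` and `Q σ` are the products of the factors in the columns before `a` and after `b`.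
theorem exists_detCol_eq_sum_adjacent (M : Matrix (Fin n) (Fin n) R) (h : b.val = a.val + 1) :
    ∃ P Q : Perm (Fin n) → R,
      (∀ σ, P (σ * Equiv.swap a b) = P σ ∧ Q (σ * Equiv.swap a b) = Q σ) ∧
      M.detCol = ∑ σ, (Perm.sign σ : ℤ) • (P σ * (M (σ a) a * M (σ b) b) * Q σ) ∧
      (M.submatrix id (Equiv.swap a b)).detCol =
        -∑ σ, (Perm.sign σ : ℤ) • (P σ * (M (σ b) b * M (σ a) a) * Q σ) := by
  obtain ⟨l₁, l₂, hl⟩ := List.exists_finRange_eq_append_cons_cons h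
  have hab : a ≠ b := Fin.ne_of_val_ne (by omega)
  have hfix : ∀ x ∈ l₁ ++ l₂, Equiv.swap a b x = x := fun x =>
    Equiv.swap_apply_of_mem_of_nodup (hl ▸ List.nodup_finRange n)
  have hfix₁ (g : Fin n → R) : l₁.map (fun i => g (Equiv.swap a b i)) = l₁.map g :=
    List.map_congr_left fun x hx => by rw [hfix x (List.mem_append_left _ hx)]
  have hfix₂ (g : Fin n → R) : l₂.map (fun i => g (Equiv.swap a b i)) = l₂.map g :=
    List.map_congr_left fun x hx => by rw [hfix x (List.mem_append_right _ hx)]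
  have hsplit (g : Fin n → R) : ((List.finRange n).map g).prod =
      (l₁.map g).prod * (g a * g b) * (l₂.map g).prod := by
    simp [hl, mul_assoc]
  refine ⟨fun σ => (l₁.map fun j => M (σ j) j).prod,
    fun σ => (l₂.map fun j => M (σ j) j).prod, fun σ => ⟨?_, ?_⟩,
    by simp only [detCol, hsplit], ?_⟩
  · exact congrArg List.prod <| List.map_congr_left fun x hx => by
      rw [Perm.mul_apply, hfix x (List.mem_append_left _ hx)]
  · exact congrArg List.prod <| List.map_congr_left fun x hx => by
      rw [Perm.mul_apply, hfix x (List.mem_append_right _ hx)]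
  · rw [detCol, ← Equiv.sum_comp (Equiv.mulRight (Equiv.swap a b)), ← sum_neg_distrib]
    refine sum_congr rfl fun σ _ => ?_
    simp only [Equiv.coe_mulRight, submatrix_apply, id, hsplit, Perm.mul_apply,
      swap_apply_left, swap_apply_right, Perm.sign_mul, Perm.sign_swap hab]
    rw [hfix₁ fun j => M (σ j) j, hfix₂ fun j => M (σ j) j]
    simp

theorem detCol_submatrix_swap_of_val_eq_succ (hM : M.IsManin) (h : b.val = a.val + 1) :
    (M.submatrix id (Equiv.swap a b)).detCol = -M.detCol := by
  obtain ⟨P, Q, hPQ, hdet, hdet_swap⟩ := exists_detCol_eq_sum_adjacent M h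
  rw [eq_neg_iff_add_eq_zero, add_comm, hdet, hdet_swap, ← sub_eq_add_neg, ← sum_sub_distrib]
  simp only [← smul_sub, ← sub_mul, ← mul_sub]
  refine Perm.sum_sign_smul_eq_zero (a := a) (b := b) (Fin.ne_of_val_ne (by omega)) _
    fun σ => ?_
  simp only [hPQ, Perm.mul_apply, swap_apply_left, swap_apply_right]
  rw [hM.2 (σ b) (σ a) a b]

theorem detCol_eq_zero_of_col_eq_of_val_eq_succ (hM : M.IsManin) (h : b.val = a.val + 1)
    (hcol : ∀ i, M i a = M i b) : M.detCol = 0 := by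
  obtain ⟨P, Q, hPQ, hdet, -⟩ := exists_detCol_eq_sum_adjacent M h
  rw [hdet]
  refine Perm.sum_sign_smul_eq_zero (a := a) (b := b) (Fin.ne_of_val_ne (by omega)) _
    fun σ => ?_
  simp only [hPQ, Perm.mul_apply, swap_apply_left, swap_apply_right, hcol]
  rw [hM.1]

end AdjacentColumns

theorem detCol_submatrix_perm_s8 {n : ℕ} {M : Matrix (Fin n) (Fin n) R} (hM : M.IsManin)
    (τ : Perm (Fin n)) : (M.submatrix id τ).detCol = (Perm.sign τ : ℤ) • M.detCol := by
  cases n with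
  | zero => rw [Subsingleton.elim τ 1]; simp
  | succ m =>
    have hτ : τ ∈ Submonoid.closure (Set.range fun i : Fin m => Equiv.swap i.castSucc i.succ) := by
      rw [Perm.mclosure_swap_castSucc_succ]; exact Submonoid.mem_top τ
    induction hτ using Submonoid.closure_induction generalizing M with
    | mem _ h =>
      obtain ⟨i, rfl⟩ := h
      rw [detCol_submatrix_swap_of_val_eq_succ hM (by simp),
        Perm.sign_swap Fin.castSucc_lt_succ.ne]
      simp
    | one => simp
    | mul σ π _ _ ihσ ihπ =>
      rw [Perm.coe_mul, ← Function.id_comp id, ← submatrix_submatrix,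
        ihπ (hM.submatrix id σ), ihσ hM, Perm.sign_mul, Units.val_mul, mul_comm, mul_smul]

theorem detCol_eq_zero_of_col_eq_s8 {n : ℕ} {M : Matrix (Fin n) (Fin n) R} (hM : M.IsManin)
    {x y : Fin n} (hxy : x ≠ y) (hcol : ∀ i, M i x = M i y) : M.detCol = 0 := by
  have hn : 1 < n := by have := Fin.val_ne_of_ne hxy; omega
  have h01 : (⟨0, by omega⟩ : Fin n) ≠ ⟨1, hn⟩ := Fin.ne_of_val_ne zero_ne_one
  obtain ⟨τ, hτ₀, hτ₁⟩ :=
    MulAction.is_two_pretransitive_iff.mp (Perm.isMultiplyPretransitive (Fin n) 2) h01 hxy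
  have hzero : (M.submatrix id τ).detCol = 0 :=
    detCol_eq_zero_of_col_eq_of_val_eq_succ (hM.submatrix id τ) (a := ⟨0, by omega⟩)
      (b := ⟨1, hn⟩) rfl fun i => by
        rw [Perm.smul_def] at hτ₀ hτ₁
        simp only [submatrix_apply, id, hτ₀, hτ₁, hcol]
  rw [detCol_submatrix_perm_s8 hM] at hzero
  rw [← one_smul ℤ M.detCol, ← Units.val_one, ← Int.units_mul_self (Perm.sign τ),
    Units.val_mul, mul_smul, hzero, smul_zero]

theorem detCol_mul_eq_sum {n m : ℕ} {A : Matrix (Fin n) (Fin m) R}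
    {B : Matrix (Fin m) (Fin n) R} (hAB : ∀ i j k l, Commute (A i j) (B k l)) :
    (A * B).detCol = ∑ f : Fin n → Fin m,
      (A.submatrix id f).detCol * ((List.finRange n).map fun j => B (f j) j).prod := by
  simp only [detCol, mul_apply, List.prod_map_finRange_sum, submatrix_apply, id, sum_mul,
    smul_mul_assoc, smul_sum]
  rw [sum_comm]
  refine sum_congr rfl fun f _ => sum_congr rfl fun σ _ => ?_
  rw [List.prod_map_mul_of_commute _ _ _ fun j k => (hAB _ _ _ _).symm]

theorem detCol_mul {n : ℕ} {A B : Matrix (Fin n) (Fin n) R} (hA : A.IsManin)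
    (hAB : ∀ i j k l, Commute (A i j) (B k l)) : (A * B).detCol = A.detCol * B.detCol := by
  rw [detCol_mul_eq_sum hAB]
  calc _ = ∑ τ : Perm (Fin n),
        (A.submatrix id τ).detCol * ((List.finRange n).map fun j => B (τ j) j).prod := by
        refine (Fintype.sum_of_injective _ DFunLike.coe_injective _ _ (fun f hf => ?_)
          fun τ => rfl).symm
        obtain ⟨x, y, hfxy, hxy⟩ := Function.not_injective_iff.1 fun hinj =>
          hf ⟨Equiv.ofBijective f (Finite.injective_iff_bijective.1 hinj), rfl⟩
        rw [detCol_eq_zero_of_col_eq_s8 (hA.submatrix id f) hxy fun i => by simp [hfxy], zero_mul]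
    _ = A.detCol * B.detCol := by
        simp only [detCol_submatrix_perm_s8 hA, smul_mul_assoc, ← mul_smul_comm, ← mul_sum]
        rfl

end Matrix

/-- if `A` and `B` are Manin matrices whose entries mutually commute,
then `A * B` is a Manin matrix and `detCol (A * B) = detCol A * detCol B`. -/
theorem isManin_mul {R : Type*} [Ring R] {n : ℕ}
    (A B : Matrix (Fin n) (Fin n) R) (hA : A.IsManin) (hB : B.IsManin)
    (hAB : ∀ i k j l : Fin n, A i j * B k l = B k l * A i j) :
    (A * B).IsManin ∧ (A * B).detCol = A.detCol * B.detCol :=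
  ⟨hA.mul hB fun i j k l => hAB i k j l, Matrix.detCol_mul hA fun i j k l => hAB i k j l⟩
end

section
/- Let M be an n×n Manin matrix over an associative unital (possibly noncommutative) ring R. Then the row permanent of M does not depend on the order of the rows used in its expansion: for every permutation p ∈ S_n one has perm^row(M) = Σ_{σ∈S_n} M_{p(1),σ(p(1))} M_{p(2),σ(p(2))} ⋯ M_{p(n),σ(p(n))}, where the factors are multiplied in the indicated order. -/
/-!
Expand the permanent along an arbitrary ordering of the rows. Exchanging two adjacent rows
`r, r'` changes each term by `A [M r (σ r), M r' (σ r')] B`, where the outer factors `A`, `B`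
do not see `σ r` and `σ r'`. Pairing `σ` with `σ * swap r r'` turns this commutator into
the cross-commutator `[M r' (σ r), M r (σ r')]` with the opposite sign, so the Manin relation
makes the two changes cancel. Adjacent exchanges generate all reorderings.
-/

open scoped BigOperators

namespace Matrix

variable {R ι : Type*} [Ring R] [DecidableEq ι]

theorem prod_map_swap_of_notMem (M : Matrix ι ι R) (σ : Equiv.Perm ι) {l : List ι} {r r' : ι}
    (hr : r ∉ l) (hr' : r' ∉ l) :
    (l.map fun i => M i (σ (Equiv.swap r r' i))).prod = (l.map fun i => M i (σ i)).prod := by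
  refine congrArg List.prod (List.map_congr_left fun i hi => ?_)
  rw [Equiv.swap_apply_of_ne_of_ne (ne_of_mem_of_not_mem hi hr)
    (ne_of_mem_of_not_mem hi hr')]

variable [Fintype ι]

noncomputable def permRowAlong (M : Matrix ι ι R) (l : List ι) : R :=
  ∑ σ : Equiv.Perm ι, (l.map fun i => M i (σ i)).prod

theorem permRowAlong_append_swap {M : Matrix ι ι R}
    (hM : ∀ i k j l, M i j * M k l - M k l * M i j = M k j * M i l - M i l * M k j)
    {pre post : List ι} {r r' : ι} (hnd : (pre ++ r :: r' :: post).Nodup) :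
    M.permRowAlong (pre ++ r :: r' :: post) = M.permRowAlong (pre ++ r' :: r :: post) := by
  simp only [List.nodup_append, List.nodup_cons, List.mem_cons, not_or] at hnd
  obtain ⟨-, ⟨⟨hrr', hr_post⟩, hr'_post, -⟩, hpre⟩ := hnd
  have hr_pre : r ∉ pre := fun h => hpre r h r (.inl rfl) rfl
  have hr'_pre : r' ∉ pre := fun h => hpre r' h r' (.inr (.inl rfl)) rfl
  simp only [permRowAlong, List.map_append, List.map_cons, List.prod_append, List.prod_cons]
  rw [← sub_eq_zero, ← Finset.sum_sub_distrib]
  refine Finset.sum_ninvolution (· * Equiv.swap r r') (fun σ => ?_)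
    (fun σ _ => mt Equiv.mul_swap_eq_iff.1 hrr') (fun _ => Finset.mem_univ _)
    (Equiv.mul_swap_mul_self r r')
  simp only [Equiv.Perm.mul_apply, prod_map_swap_of_notMem M σ hr_pre hr'_pre,
    prod_map_swap_of_notMem M σ hr_post hr'_post, Equiv.swap_apply_left, Equiv.swap_apply_right]
  set A := (pre.map fun i => M i (σ i)).prod
  set B := (post.map fun i => M i (σ i)).prod
  calc _ = A * ((M r (σ r) * M r' (σ r') - M r' (σ r') * M r (σ r))
        - (M r' (σ r) * M r (σ r') - M r (σ r') * M r' (σ r))) * B := by noncomm_ring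
    _ = 0 := by rw [hM, sub_self, mul_zero, zero_mul]

theorem permRowAlong_append_perm {M : Matrix ι ι R}
    (hM : ∀ i k j l, M i j * M k l - M k l * M i j = M k j * M i l - M i l * M k j)
    {l₁ l₂ : List ι} (h : l₁.Perm l₂) (pre : List ι) (hnd : (pre ++ l₁).Nodup) :
    M.permRowAlong (pre ++ l₁) = M.permRowAlong (pre ++ l₂) := by
  induction h generalizing pre with
  | nil => rfl
  | cons x _ ih => simpa using ih (pre ++ [x]) (by simpa using hnd)
  | swap x y l => exact permRowAlong_append_swap hM hnd
  | trans h₁₂ _ ih₁₂ ih₂₃ =>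
    rw [ih₁₂ pre hnd, ih₂₃ pre ((h₁₂.append_left pre).nodup_iff.1 hnd)]

theorem permRowAlong_perm {M : Matrix ι ι R}
    (hM : ∀ i k j l, M i j * M k l - M k l * M i j = M k j * M i l - M i l * M k j)
    {l₁ l₂ : List ι} (h : l₁.Perm l₂) (hnd : l₁.Nodup) :
    M.permRowAlong l₁ = M.permRowAlong l₂ :=
  permRowAlong_append_perm hM h [] hnd

end Matrix

/-- the row permanent of a Manin matrix does not depend on the order
of the rows used in its expansion. -/
theorem permRow_row_order_independent {R : Type*} [Ring R] {n : ℕ}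
    (M : Matrix (Fin n) (Fin n) R) (hM : M.IsManin) (p : Equiv.Perm (Fin n)) :
    M.permRow = ∑ σ : Equiv.Perm (Fin n),
      ((List.finRange n).map (fun i => M (p i) (σ (p i)))).prod := by
  have hrhs : M.permRowAlong ((List.finRange n).map p)
      = ∑ σ : Equiv.Perm (Fin n), ((List.finRange n).map (fun i => M (p i) (σ (p i)))).prod := by
    simp only [Matrix.permRowAlong, List.map_map, Function.comp_def]
  rw [← hrhs]
  exact Matrix.permRowAlong_perm hM.2 p.map_finRange_perm.symm (List.nodup_finRange n)
end
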